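/- Let K be a field of characteristic zero with distinguished elements ε₁, ε₂ ≠ 0, μ, and let b ≥ 2. Let (S_{0,p})_{p≥1} be constants in K with W₀(x) = −(2μ/ε₂) x^{−1} − Σ_{p≥1} p S_{0,p} x^{−p−1}, and for 1 ≤ a ≤ b let (S_{a,p}(t))_{p≥0} ⊆ K[[t]] with S_a(x,t) = Σ_{p≥0} S_{a,p}(t) x^{−p}, ∂ₓS_a = −Σ_p p S_{a,p} x^{−p−1}, ∂ₓ²S_a = Σ_p p(p+1) S_{a,p} x^{−p−2}, and with ∂ₓS₀ := W₀. Suppose that, as an identity of formal series in x^{−1} with coefficients in K[[t]], (1−tx)² [ε₂² ∂ₓ²S_b + ε₂² Σ_{a=0}^{b} (∂ₓS_a)(∂ₓS_{b−a}) + 2ε₂ x ∂ₓS_b] − 2ε₂ t ∂ₓS_{b−1} + b ε₁ε₂ t²(2−tx) S_b + ε₁ε₂ t³(1−tx) ∂_t S_b = 0. Then, with Θ_t = t·d/dt and the convention S_{a,p} = 0 for p ≤ −1, for every p ≥ 0: 2(p+2)t² S_{b,p+2} − 4(p+1)t S_{b,p+1} + ε₁ t³ (Θ_t+b) S_{b,p+1}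 − ε₁ t² (Θ_t+2b) S_{b,p} − p(p+1)ε₂ t² S_{b,p} − 4pμ t² S_{b,p} + 2p S_{b,p} + 2(p−1)p ε₂ t S_{b,p−1} + 8(p−1)μ t S_{b,p−1} − (p−2)(p−1)ε₂ S_{b,p−2} − 4(p−2)μ S_{b,p−2} − 2(p−1)t S_{b−1,p−1} − ε₂ t² Σ_{a=0}^{b} Σ_{q=1}^{p−1} q(p−q) S_{a,q} S_{b−a,p−q} + 2ε₂ t Σ_{a=0}^{b} Σ_{q=2}^{p−1} (q−1)(p−q) S_{a,q−1} S_{b−a,p−q} − ε₂ Σ_{a=0}^{b} Σ_{q=3}^{p−1} (q−2)(p−q) S_{a,q−2} S_{b−a,p−q} = 0. -/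

import Mathlib

open PowerSeries

/-- The operator `Θ_t = t · d/dt` on formal power series in `t`. -/
noncomputable def thetaT (K : Type*) [CommRing K] (f : PowerSeries K) : PowerSeries K :=
  PowerSeries.X * PowerSeries.derivativeFun f

/-- The coefficients `S_{a,j}` with the convention `S_{a,j} = 0` for `j ≤ −1`, where
`S_{0,j}` are the constants `S0 j ∈ K` and `S_{a,j} = S a j ∈ K[[t]]` for `a ≥ 1`. -/
noncomputable def coeffS {K : Type*} [Field K] (S0 : ℕ → K)
    (S : ℕ → ℕ → PowerSeries K) (a : ℕ) (j : ℤ) : PowerSeries K :=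
  if j < 0 then 0
  else if a = 0 then PowerSeries.C (S0 j.toNat) else S a j.toNat

/-!
In the variable `X = x⁻¹` one has `∂ₓ = -X² d/dX`, so
`∂ₓS_a = X (w_a - Σ_j j S_{a,j} X^j)`, where `w_a = -2μ/ε₂` comes from the logarithm and
occurs only for `a = 0`. Hence the quadratic term `Σ_a ∂ₓS_a ∂ₓS_{b-a}` is `X²` times the sum
of the Cauchy products of these Euler derivatives, minus `2 w_0` times the Euler derivative of
`S_b` (the cross terms `a = 0` and `a = b`; the `w_0²` term is absent since `b ≠ 0`).
Multiplication by `x` shifts Laurent coefficients by one and `t` acts on them as a scalar, so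
the coefficient of `x^{-p}` of the equation is a linear relation among the `S_{b,j}` and these
Cauchy sums. Dividing by `ε₂` and using `ε₂ w_0 = -2μ` gives the recursion.
-/

namespace PowerSeries

variable {R : Type*} [CommRing R]

/-- The Euler derivative `X d/dX` of `Σ c j X ^ j`. In the variable `X = x⁻¹` the chain rule
reads `∂ₓ = -X² d/dX`, so `∂ₓ (Σ c j x ^ (-j)) = -X * eulerSeries c`. -/
noncomputable def eulerSeries (c : ℤ → R) : R⟦X⟧ := mk fun j => (j : R) * c j

theorem coeff_X_pow_mul_eulerSeries (c : ℤ → R) (hc : ∀ j < 0, c j = 0) (k n : ℕ) :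
    coeff n (X ^ k * eulerSeries c) = ((n : R) - k) * c (n - k) := by
  rw [coeff_X_pow_mul']
  split_ifs with h
  · simp [eulerSeries, Nat.cast_sub h]
  · rw [hc _ (by omega), mul_zero]

theorem coeff_X_pow_mul_eulerSeries_mul (c d : ℤ → R) (hc : ∀ j < 0, c j = 0) (k p : ℕ) :
    coeff p (X ^ k * eulerSeries c * eulerSeries d) =
      ∑ q ∈ Finset.Icc (k + 1) (p - 1),
        ((q : R) - k) * ((p : R) - q) * c (q - k) * d (p - q) := by
  calc coeff p (X ^ k * eulerSeries c * eulerSeries d)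
      = ∑ q ∈ Finset.range (p + 1), ((q : R) - k) * ((p : R) - q) * c (q - k) * d (p - q) := by
        rw [coeff_mul, Finset.Nat.sum_antidiagonal_eq_sum_range_succ
          (fun i j => coeff i (X ^ k * eulerSeries c) * coeff j (eulerSeries d))]
        refine Finset.sum_congr rfl fun q hq => ?_
        have hqp : q ≤ p := Nat.lt_succ_iff.mp (Finset.mem_range.mp hq)
        rw [coeff_X_pow_mul_eulerSeries c hc, eulerSeries, coeff_mk]
        push_cast [hqp]
        ring
    _ = _ := by
        refine (Finset.sum_subset (fun q hq => ?_) fun q hq hq' => ?_).symm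
        · simp only [Finset.mem_Icc, Finset.mem_range] at hq ⊢
          omega
        · simp only [Finset.mem_Icc, Finset.mem_range, not_and_or, not_le] at hq hq'
          rcases lt_trichotomy q k with hqk | rfl | hqk
          · rw [hc _ (by omega), mul_zero, zero_mul]
          · rw [sub_self, zero_mul, zero_mul, zero_mul]
          · obtain rfl : q = p := by omega
            rw [sub_self, mul_zero, zero_mul, zero_mul]

end PowerSeries

theorem Finset.sum_range_ite_sub_mul_ite_sub {A : Type*} [CommRing A] (u : A) (f : ℕ → A)
    {b : ℕ} (hb : b ≠ 0) :
    ∑ a ∈ Finset.range (b + 1),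
        ((if a = 0 then u else 0) - f a) * ((if b - a = 0 then u else 0) - f (b - a)) =
      ∑ a ∈ Finset.range (b + 1), f a * f (b - a) - 2 * u * f b := by
  have hterm : ∀ a ∈ Finset.range (b + 1),
      ((if a = 0 then u else 0) - f a) * ((if b - a = 0 then u else 0) - f (b - a)) =
        f a * f (b - a) - (if a = 0 then u * f (b - a) else 0)
          - (if a = b then u * f a else 0) := by
    intro a ha
    have hab : a ≤ b := Nat.lt_succ_iff.mp (Finset.mem_range.mp ha)
    split_ifs <;> first | omega | ring
  have hmem : ∀ a ≤ b, a ∈ Finset.range (b + 1) := fun a h => Finset.mem_range.mpr (by omega)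
  rw [Finset.sum_congr rfl hterm, Finset.sum_sub_distrib, Finset.sum_sub_distrib,
    Finset.sum_ite_eq', Finset.sum_ite_eq', if_pos (hmem 0 b.zero_le), if_pos (hmem b le_rfl),
    Nat.sub_zero]
  ring

namespace LaurentSeries

variable {R : Type*} [CommRing R]

theorem coeff_C_mul (r : R) (f : LaurentSeries R) (n : ℤ) :
    (HahnSeries.C r * f).coeff n = r * f.coeff n := by
  rw [HahnSeries.C_mul_eq_smul, HahnSeries.coeff_smul, smul_eq_mul]

theorem coeff_single_neg_one_mul (f : LaurentSeries R) (n : ℤ) :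
    (HahnSeries.single (-1 : ℤ) (1 : R) * f).coeff n = f.coeff (n + 1) := by
  simpa using HahnSeries.coeff_single_mul_add (r := (1 : R)) (x := f) (a := n + 1) (b := -1)

theorem coeff_ofPowerSeries_X_pow_mul (F : PowerSeries R) (m : ℕ) (n : ℤ) :
    (HahnSeries.ofPowerSeries ℤ R (X ^ m * F)).coeff n =
      (HahnSeries.ofPowerSeries ℤ R F).coeff (n - m) := by
  simpa [map_mul] using HahnSeries.coeff_single_mul_add (r := (1 : R))
    (x := HahnSeries.ofPowerSeries ℤ R F) (a := n - m) (b := (m : ℤ))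

theorem coeff_ofPowerSeries_mk (f : ℕ → R) (c : ℤ → R) (hc : ∀ n < 0, c n = 0)
    (hf : ∀ n : ℕ, f n = c n) (n : ℤ) :
    (HahnSeries.ofPowerSeries ℤ R (mk f)).coeff n = c n := by
  rw [coeff_coe]
  split_ifs with hn
  · exact (hc n hn).symm
  · rw [coeff_mk, hf, Int.natAbs_of_nonneg (not_lt.mp hn)]

theorem coeff_ofPowerSeries_eulerSeries (c : ℤ → R) (hc : ∀ j < 0, c j = 0) (n : ℤ) :
    (HahnSeries.ofPowerSeries ℤ R (eulerSeries c)).coeff n = n * c n :=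
  coeff_ofPowerSeries_mk _ (fun n : ℤ => (n : R) * c n)
    (fun n hn => by rw [hc n hn, mul_zero]) (fun n => by push_cast; rfl) n

theorem coeff_X_pow_mul_eq_coeff_ofPowerSeries (F : PowerSeries R) (k p : ℕ) :
    coeff p (X ^ k * F) = (HahnSeries.ofPowerSeries ℤ R F).coeff ((p : ℤ) - k) := by
  rw [← HahnSeries.ofPowerSeries_apply_coeff (Γ := ℤ), coeff_ofPowerSeries_X_pow_mul]

theorem sum_mul_eq_ofPowerSeries (w : R) (c : ℕ → ℤ → R) {b : ℕ} (hb : b ≠ 0)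
    (D : ℕ → LaurentSeries R)
    (hD : ∀ a, D a = HahnSeries.ofPowerSeries ℤ R
      (X * ((if a = 0 then C w else 0) - eulerSeries (c a)))) :
    ∑ a ∈ Finset.range (b + 1), D a * D (b - a) =
      HahnSeries.ofPowerSeries ℤ R (X ^ 2 *
        (∑ a ∈ Finset.range (b + 1), eulerSeries (c a) * eulerSeries (c (b - a))
          - 2 * C w * eulerSeries (c b))) := by
  rw [← Finset.sum_range_ite_sub_mul_ite_sub _ _ hb, Finset.mul_sum, map_sum]
  refine Finset.sum_congr rfl fun a _ => ?_
  rw [hD, hD, ← map_mul]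
  congr 1
  ring

theorem coeff_ofPowerSeries_sum_eulerSeries_mul (w : R) (c : ℕ → ℤ → R)
    (hc : ∀ a, ∀ j < 0, c a j = 0) (b k p : ℕ) :
    (HahnSeries.ofPowerSeries ℤ R
        (∑ a ∈ Finset.range (b + 1), eulerSeries (c a) * eulerSeries (c (b - a))
          - 2 * C w * eulerSeries (c b))).coeff ((p : ℤ) - k) =
      ∑ a ∈ Finset.range (b + 1), ∑ q ∈ Finset.Icc (k + 1) (p - 1),
          ((q : R) - k) * ((p : R) - q) * c a (q - k) * c (b - a) (p - q)
        - 2 * w * (((p : R) - k) * c b (p - k)) := by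
  have h2w : (2 : R⟦X⟧) * C w = C (2 * w) := by rw [map_mul, map_ofNat]
  rw [← coeff_X_pow_mul_eq_coeff_ofPowerSeries, mul_sub, map_sub, Finset.mul_sum, map_sum, h2w,
    mul_left_comm, PowerSeries.coeff_C_mul, coeff_X_pow_mul_eulerSeries _ (hc b)]
  simp only [← mul_assoc, coeff_X_pow_mul_eulerSeries_mul _ _ (hc _)]

theorem coeff_ofPowerSeries_neg_X_mul_eulerSeries (c : ℤ → R) (hc : ∀ j < 0, c j = 0)
    (n : ℤ) :
    (HahnSeries.ofPowerSeries ℤ R (-(X * eulerSeries c))).coeff n =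
      -(((n : R) - 1) * c (n - 1)) := by
  have h := coeff_ofPowerSeries_X_pow_mul (eulerSeries c) 1 n
  rw [pow_one, Nat.cast_one] at h
  rw [map_neg, HahnSeries.coeff_neg, h, coeff_ofPowerSeries_eulerSeries c hc]
  push_cast
  rfl

theorem coeff_eq_zero_of_hierarchy_eq_zero (τ α β γ δ : R) (A B F G U V : LaurentSeries R)
    (n : ℤ)
    (h : (1 - HahnSeries.C τ * HahnSeries.single (-1 : ℤ) 1) ^ 2 *
          (HahnSeries.C α * A + HahnSeries.C α * B
            + HahnSeries.C β * HahnSeries.single (-1 : ℤ) 1 * F)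
        - HahnSeries.C β * HahnSeries.C τ * G
        + HahnSeries.C γ * HahnSeries.C τ ^ 2 *
            (2 - HahnSeries.C τ * HahnSeries.single (-1 : ℤ) 1) * U
        + HahnSeries.C δ * HahnSeries.C τ ^ 3 *
            (1 - HahnSeries.C τ * HahnSeries.single (-1 : ℤ) 1) * V
        = 0) :
    α * (A.coeff n + B.coeff n) + β * F.coeff (n + 1)
      - 2 * τ * (α * (A.coeff (n + 1) + B.coeff (n + 1)) + β * F.coeff (n + 2))
      + τ ^ 2 * (α * (A.coeff (n + 2) + B.coeff (n + 2)) + β * F.coeff (n + 3))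
      - β * τ * G.coeff n + γ * τ ^ 2 * (2 * U.coeff n - τ * U.coeff (n + 1))
      + δ * τ ^ 3 * (V.coeff n - τ * V.coeff (n + 1)) = 0 := by
  have hn := congrArg (HahnSeries.coeff · n) h
  simp only [pow_succ, pow_zero, ← map_mul, mul_assoc, sub_mul, one_mul, two_mul,
    HahnSeries.coeff_add, HahnSeries.coeff_sub, coeff_C_mul, coeff_single_neg_one_mul,
    HahnSeries.coeff_zero] at hn
  simp only [add_assoc, Int.reduceAdd] at hn
  linear_combination hn

end LaurentSeries

section PhaseCoefficients

variable {K : Type*} [Field K] (S0 : ℕ → K) (S : ℕ → ℕ → PowerSeries K)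

theorem coeffS_of_neg (a : ℕ) {j : ℤ} (hj : j < 0) : coeffS S0 S a j = 0 := if_pos hj

theorem coeffS_natCast {a : ℕ} (ha : a ≠ 0) (n : ℕ) : coeffS S0 S a n = S a n := by
  simp [coeffS, ha]

theorem coeffS_zero_natCast (n : ℕ) : coeffS S0 S 0 n = C (S0 n) := by
  simp [coeffS]

theorem mk_neg_mul_eq_neg_X_mul_eulerSeries {a : ℕ} (ha : a ≠ 0) :
    (mk fun n => if n = 0 then 0 else -(C (((n - 1 : ℕ) : K))) * S a (n - 1)) =
      -(X * eulerSeries (coeffS S0 S a)) := by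
  ext (_ | n)
  · simp
  · simp [eulerSeries, coeffS_natCast S0 S ha]

theorem mk_W₀_eq_X_mul_sub_eulerSeries (w : K) :
    (mk fun n => if n = 0 then 0 else if n = 1 then C w
      else C (-(((n - 1 : ℕ) : K) * S0 (n - 1)))) =
      X * (C (C w) - eulerSeries (coeffS S0 S 0)) := by
  ext (_ | _ | n)
  · simp
  · simp [eulerSeries]
  · simp [eulerSeries, coeffS_zero_natCast]

theorem coeff_ofPowerSeries_mk_secondDeriv {a : ℕ} (ha : a ≠ 0) (n : ℤ) :
    (HahnSeries.ofPowerSeries ℤ (PowerSeries K) (mk fun n =>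
      if n ≤ 1 then 0
      else C (((n - 2 : ℕ) : K) * ((n - 1 : ℕ) : K)) * S a (n - 2))).coeff n =
      C (((n : K) - 2) * ((n : K) - 1)) * coeffS S0 S a (n - 2) := by
  refine LaurentSeries.coeff_ofPowerSeries_mk _
    (fun n : ℤ => C (((n : K) - 2) * ((n : K) - 1)) * coeffS S0 S a (n - 2))
    (fun n hn => by rw [coeffS_of_neg S0 S a (by omega), mul_zero]) (fun n => ?_) n
  split_ifs with hn
  · rw [coeffS_of_neg S0 S a (by omega), mul_zero]
  · rw [show (n : ℤ) - 2 = ((n - 2 : ℕ) : ℤ) by omega, coeffS_natCast S0 S ha]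
    push_cast [show 2 ≤ n by omega, show 1 ≤ n by omega]
    rfl

theorem coeff_ofPowerSeries_mk_eq_coeffS {a : ℕ} (ha : a ≠ 0) (n : ℤ) :
    (HahnSeries.ofPowerSeries ℤ (PowerSeries K) (mk fun p => S a p)).coeff n =
      coeffS S0 S a n :=
  LaurentSeries.coeff_ofPowerSeries_mk _ _ (fun _ hn => coeffS_of_neg S0 S a hn)
    (fun n => (coeffS_natCast S0 S ha n).symm) n

theorem coeff_ofPowerSeries_mk_derivativeFun {a : ℕ} (ha : a ≠ 0) (n : ℤ) :
    (HahnSeries.ofPowerSeries ℤ (PowerSeries K) (mk fun p => derivativeFun (S a p))).coeff n =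
      derivativeFun (coeffS S0 S a n) :=
  LaurentSeries.coeff_ofPowerSeries_mk _ (fun n => derivativeFun (coeffS S0 S a n))
    (fun _ hn => by rw [coeffS_of_neg S0 S a hn]; exact map_zero (derivative K))
    (fun n => by rw [coeffS_natCast S0 S ha]) n

theorem eq_ofPowerSeries_X_mul_sub_eulerSeries (w : K) (Dx : ℕ → LaurentSeries (PowerSeries K))
    (hDx0 : Dx 0 = HahnSeries.ofPowerSeries ℤ (PowerSeries K) (mk fun n =>
      if n = 0 then 0 else if n = 1 then C w else C (-(((n - 1 : ℕ) : K) * S0 (n - 1)))))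
    (hDx : ∀ a : ℕ, 1 ≤ a → Dx a = HahnSeries.ofPowerSeries ℤ (PowerSeries K) (mk fun n =>
      if n = 0 then 0 else -(C (((n - 1 : ℕ) : K))) * S a (n - 1)))
    (a : ℕ) :
    Dx a = HahnSeries.ofPowerSeries ℤ (PowerSeries K)
      (X * ((if a = 0 then C (C w) else 0) - eulerSeries (coeffS S0 S a))) := by
  rcases eq_or_ne a 0 with rfl | ha
  · rw [hDx0, mk_W₀_eq_X_mul_sub_eulerSeries S0 S, if_pos rfl]
  · rw [hDx a (Nat.one_le_iff_ne_zero.mpr ha), mk_neg_mul_eq_neg_X_mul_eulerSeries S0 S ha,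
      if_neg ha, zero_sub, mul_neg]

end PhaseCoefficients

theorem multi_backbone_phase_hierarchy_general (K : Type*) [Field K]
    (ε₁ ε₂ μ : K) (hε₂ : ε₂ ≠ 0) (b : ℕ) (hb : 2 ≤ b)
    (S0 : ℕ → K) (S : ℕ → ℕ → PowerSeries K)
    (x t W₀ SbL DxxSb DtSb : LaurentSeries (PowerSeries K))
    (Dx : ℕ → LaurentSeries (PowerSeries K))
    (hx : x = HahnSeries.single (-1 : ℤ) 1)
    (ht : t = HahnSeries.C (PowerSeries.X : PowerSeries K))
    (hW₀ : W₀ = HahnSeries.ofPowerSeries ℤ (PowerSeries K) (PowerSeries.mk fun n =>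
      if n = 0 then 0
      else if n = 1 then PowerSeries.C (-(2 * μ / ε₂))
      else PowerSeries.C (-(((n - 1 : ℕ) : K) * S0 (n - 1)))))
    (hDx0 : Dx 0 = W₀)
    (hDx : ∀ a : ℕ, 1 ≤ a →
      Dx a = HahnSeries.ofPowerSeries ℤ (PowerSeries K) (PowerSeries.mk fun n =>
        if n = 0 then 0 else -(PowerSeries.C (((n - 1 : ℕ) : K))) * S a (n - 1)))
    (hSbL : SbL = HahnSeries.ofPowerSeries ℤ (PowerSeries K)
      (PowerSeries.mk fun p => S b p))
    (hDxxSb : DxxSb = HahnSeries.ofPowerSeries ℤ (PowerSeries K) (PowerSeries.mk fun n =>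
      if n ≤ 1 then 0
      else PowerSeries.C (((n - 2 : ℕ) : K) * ((n - 1 : ℕ) : K)) * S b (n - 2)))
    (hDtSb : DtSb = HahnSeries.ofPowerSeries ℤ (PowerSeries K)
      (PowerSeries.mk fun p => PowerSeries.derivativeFun (S b p)))
    (heq : (1 - t * x) ^ 2 *
          (HahnSeries.C (PowerSeries.C (ε₂ ^ 2)) * DxxSb
            + HahnSeries.C (PowerSeries.C (ε₂ ^ 2)) *
                ∑ a ∈ Finset.range (b + 1), Dx a * Dx (b - a)
            + HahnSeries.C (PowerSeries.C (2 * ε₂)) * x * Dx b)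
        - HahnSeries.C (PowerSeries.C (2 * ε₂)) * t * Dx (b - 1)
        + HahnSeries.C (PowerSeries.C ((b : K) * (ε₁ * ε₂))) * t ^ 2 * (2 - t * x) * SbL
        + HahnSeries.C (PowerSeries.C (ε₁ * ε₂)) * t ^ 3 * (1 - t * x) * DtSb
        = 0) :
    ∀ p : ℕ,
      PowerSeries.C (2 * ((p : K) + 2)) * PowerSeries.X ^ 2 *
          coeffS S0 S b ((p : ℤ) + 2)
        - PowerSeries.C (4 * ((p : K) + 1)) * PowerSeries.X *
            coeffS S0 S b ((p : ℤ) + 1)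
        + PowerSeries.C ε₁ * PowerSeries.X ^ 3 *
            (thetaT K (coeffS S0 S b ((p : ℤ) + 1))
              + PowerSeries.C (b : K) * coeffS S0 S b ((p : ℤ) + 1))
        - PowerSeries.C ε₁ * PowerSeries.X ^ 2 *
            (thetaT K (coeffS S0 S b (p : ℤ))
              + PowerSeries.C (2 * (b : K)) * coeffS S0 S b (p : ℤ))
        - PowerSeries.C ((p : K) * ((p : K) + 1) * ε₂) * PowerSeries.X ^ 2 *
            coeffS S0 S b (p : ℤ)
        - PowerSeries.C (4 * (p : K) * μ) * PowerSeries.X ^ 2 * coeffS S0 S b (p : ℤ)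
        + PowerSeries.C (2 * (p : K)) * coeffS S0 S b (p : ℤ)
        + PowerSeries.C (2 * ((p : K) - 1) * (p : K) * ε₂) * PowerSeries.X *
            coeffS S0 S b ((p : ℤ) - 1)
        + PowerSeries.C (8 * ((p : K) - 1) * μ) * PowerSeries.X *
            coeffS S0 S b ((p : ℤ) - 1)
        - PowerSeries.C (((p : K) - 2) * ((p : K) - 1) * ε₂) *
            coeffS S0 S b ((p : ℤ) - 2)
        - PowerSeries.C (4 * ((p : K) - 2) * μ) * coeffS S0 S b ((p : ℤ) - 2)
        - PowerSeries.C (2 * ((p : K) - 1)) * PowerSeries.X *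
            coeffS S0 S (b - 1) ((p : ℤ) - 1)
        - PowerSeries.C ε₂ * PowerSeries.X ^ 2 *
            ∑ a ∈ Finset.range (b + 1), ∑ q ∈ Finset.Icc 1 (p - 1),
              PowerSeries.C ((q : K) * ((p : K) - (q : K))) *
                coeffS S0 S a (q : ℤ) * coeffS S0 S (b - a) ((p : ℤ) - (q : ℤ))
        + PowerSeries.C (2 * ε₂) * PowerSeries.X *
            ∑ a ∈ Finset.range (b + 1), ∑ q ∈ Finset.Icc 2 (p - 1),
              PowerSeries.C (((q : K) - 1) * ((p : K) - (q : K))) *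
                coeffS S0 S a ((q : ℤ) - 1) * coeffS S0 S (b - a) ((p : ℤ) - (q : ℤ))
        - PowerSeries.C ε₂ *
            ∑ a ∈ Finset.range (b + 1), ∑ q ∈ Finset.Icc 3 (p - 1),
              PowerSeries.C (((q : K) - 2) * ((p : K) - (q : K))) *
                coeffS S0 S a ((q : ℤ) - 2) * coeffS S0 S (b - a) ((p : ℤ) - (q : ℤ))
        = 0 := by
  intro p
  subst hx ht hDxxSb hSbL hDtSb
  have hb0 : b ≠ 0 := by omega
  have hb1 : b - 1 ≠ 0 := by omega
  have hDx' := eq_ofPowerSeries_X_mul_sub_eulerSeries S0 S _ Dx (hDx0.trans hW₀) hDx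
  have hneg : ∀ a, ∀ j < 0, coeffS S0 S a j = 0 := fun a _ hj => coeffS_of_neg S0 S a hj
  rw [LaurentSeries.sum_mul_eq_ofPowerSeries _ _ hb0 Dx hDx'] at heq
  have h := LaurentSeries.coeff_eq_zero_of_hierarchy_eq_zero _ _ _ _ _ _ _ _ _ _ _ p heq
  rw [hDx b (by omega), hDx (b - 1) (by omega), mk_neg_mul_eq_neg_X_mul_eulerSeries S0 S hb0,
    mk_neg_mul_eq_neg_X_mul_eulerSeries S0 S hb1] at h
  simp only [LaurentSeries.coeff_ofPowerSeries_X_pow_mul,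
    LaurentSeries.coeff_ofPowerSeries_neg_X_mul_eulerSeries _ (hneg _),
    coeff_ofPowerSeries_mk_secondDeriv S0 S hb0, coeff_ofPowerSeries_mk_eq_coeffS S0 S hb0,
    coeff_ofPowerSeries_mk_derivativeFun S0 S hb0] at h
  rw [show (p : ℤ) + 1 - ((2 : ℕ) : ℤ) = p - ((1 : ℕ) : ℤ) by push_cast; ring,
    show (p : ℤ) + 2 - ((2 : ℕ) : ℤ) = p - ((0 : ℕ) : ℤ) by push_cast; ring] at h
  simp only [LaurentSeries.coeff_ofPowerSeries_sum_eulerSeries_mul _ _ hneg] at h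
  have hw : C ε₂ * C (-(2 * μ / ε₂)) = -(2 * C μ) := by
    rw [← map_mul, mul_neg, mul_div_cancel₀ _ hε₂, map_neg, map_mul, map_ofNat]
  refine mul_left_cancel₀ ((map_ne_zero C).mpr hε₂) ?_
  simp only [thetaT, Nat.cast_zero, Nat.cast_one, Nat.cast_ofNat, sub_zero, Nat.reduceAdd,
    map_mul, map_sub, map_add, map_natCast, map_ofNat, map_pow, map_intCast, map_one] at h ⊢
  push_cast at h ⊢
  linear_combination (norm := ring_nf) -h - 2 * C ε₂ * ((p - 2) * coeffS S0 S b (p - 2)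
    - 2 * X * (p - 1) * coeffS S0 S b (p - 1) + X ^ 2 * p * coeffS S0 S b p) * hw

/-- **The hierarchy of equations for the multi-backbone phase functions**
(Corollary 3.4 of the paper).  The phase functions are formal series in `x⁻¹` with
coefficients in `K[[t]]`, realised as formal Laurent series over `K[[t]]` in the
variable `X = x⁻¹` (so multiplication by `x` is multiplication by
`HahnSeries.single (−1) 1`), with `∂ₓS₀ := W₀`.  If the order-`s^b` equation of the
quantum-curve hierarchy (cleared of denominators by `(1−tx)²`) holds, then the
coefficients `S_{b,p}(t)` satisfy the stated recursion for every `p ≥ 0`, with the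
convention `S_{a,p} = 0` for `p ≤ −1`. -/
theorem multi_backbone_phase_hierarchy (K : Type*) [Field K] [CharZero K]
    (ε₁ ε₂ μ : K) (hε₁ : ε₁ ≠ 0) (hε₂ : ε₂ ≠ 0) (b : ℕ) (hb : 2 ≤ b)
    (S0 : ℕ → K) (S : ℕ → ℕ → PowerSeries K)
    (x t W₀ SbL DxxSb DtSb : LaurentSeries (PowerSeries K))
    (Dx : ℕ → LaurentSeries (PowerSeries K))
    (hx : x = HahnSeries.single (-1 : ℤ) 1)
    (ht : t = HahnSeries.C (PowerSeries.X : PowerSeries K))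
    (hW₀ : W₀ = HahnSeries.ofPowerSeries ℤ (PowerSeries K) (PowerSeries.mk fun n =>
      if n = 0 then 0
      else if n = 1 then PowerSeries.C (-(2 * μ / ε₂))
      else PowerSeries.C (-(((n - 1 : ℕ) : K) * S0 (n - 1)))))
    (hDx0 : Dx 0 = W₀)
    (hDx : ∀ a : ℕ, 1 ≤ a →
      Dx a = HahnSeries.ofPowerSeries ℤ (PowerSeries K) (PowerSeries.mk fun n =>
        if n = 0 then 0 else -(PowerSeries.C (((n - 1 : ℕ) : K))) * S a (n - 1)))
    (hSbL : SbL = HahnSeries.ofPowerSeries ℤ (PowerSeries K)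
      (PowerSeries.mk fun p => S b p))
    (hDxxSb : DxxSb = HahnSeries.ofPowerSeries ℤ (PowerSeries K) (PowerSeries.mk fun n =>
      if n ≤ 1 then 0
      else PowerSeries.C (((n - 2 : ℕ) : K) * ((n - 1 : ℕ) : K)) * S b (n - 2)))
    (hDtSb : DtSb = HahnSeries.ofPowerSeries ℤ (PowerSeries K)
      (PowerSeries.mk fun p => PowerSeries.derivativeFun (S b p)))
    (heq : (1 - t * x) ^ 2 *
          (HahnSeries.C (PowerSeries.C (ε₂ ^ 2)) * DxxSb
            + HahnSeries.C (PowerSeries.C (ε₂ ^ 2)) *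
                ∑ a ∈ Finset.range (b + 1), Dx a * Dx (b - a)
            + HahnSeries.C (PowerSeries.C (2 * ε₂)) * x * Dx b)
        - HahnSeries.C (PowerSeries.C (2 * ε₂)) * t * Dx (b - 1)
        + HahnSeries.C (PowerSeries.C ((b : K) * (ε₁ * ε₂))) * t ^ 2 * (2 - t * x) * SbL
        + HahnSeries.C (PowerSeries.C (ε₁ * ε₂)) * t ^ 3 * (1 - t * x) * DtSb
        = 0) :
    ∀ p : ℕ,
      PowerSeries.C (2 * ((p : K) + 2)) * PowerSeries.X ^ 2 *
          coeffS S0 S b ((p : ℤ) + 2)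
        - PowerSeries.C (4 * ((p : K) + 1)) * PowerSeries.X *
            coeffS S0 S b ((p : ℤ) + 1)
        + PowerSeries.C ε₁ * PowerSeries.X ^ 3 *
            (thetaT K (coeffS S0 S b ((p : ℤ) + 1))
              + PowerSeries.C (b : K) * coeffS S0 S b ((p : ℤ) + 1))
        - PowerSeries.C ε₁ * PowerSeries.X ^ 2 *
            (thetaT K (coeffS S0 S b (p : ℤ))
              + PowerSeries.C (2 * (b : K)) * coeffS S0 S b (p : ℤ))
        - PowerSeries.C ((p : K) * ((p : K) + 1) * ε₂) * PowerSeries.X ^ 2 *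
            coeffS S0 S b (p : ℤ)
        - PowerSeries.C (4 * (p : K) * μ) * PowerSeries.X ^ 2 * coeffS S0 S b (p : ℤ)
        + PowerSeries.C (2 * (p : K)) * coeffS S0 S b (p : ℤ)
        + PowerSeries.C (2 * ((p : K) - 1) * (p : K) * ε₂) * PowerSeries.X *
            coeffS S0 S b ((p : ℤ) - 1)
        + PowerSeries.C (8 * ((p : K) - 1) * μ) * PowerSeries.X *
            coeffS S0 S b ((p : ℤ) - 1)
        - PowerSeries.C (((p : K) - 2) * ((p : K) - 1) * ε₂) *
            coeffS S0 S b ((p : ℤ) - 2)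
        - PowerSeries.C (4 * ((p : K) - 2) * μ) * coeffS S0 S b ((p : ℤ) - 2)
        - PowerSeries.C (2 * ((p : K) - 1)) * PowerSeries.X *
            coeffS S0 S (b - 1) ((p : ℤ) - 1)
        - PowerSeries.C ε₂ * PowerSeries.X ^ 2 *
            ∑ a ∈ Finset.range (b + 1), ∑ q ∈ Finset.Icc 1 (p - 1),
              PowerSeries.C ((q : K) * ((p : K) - (q : K))) *
                coeffS S0 S a (q : ℤ) * coeffS S0 S (b - a) ((p : ℤ) - (q : ℤ))
        + PowerSeries.C (2 * ε₂) * PowerSeries.X *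
            ∑ a ∈ Finset.range (b + 1), ∑ q ∈ Finset.Icc 2 (p - 1),
              PowerSeries.C (((q : K) - 1) * ((p : K) - (q : K))) *
                coeffS S0 S a ((q : ℤ) - 1) * coeffS S0 S (b - a) ((p : ℤ) - (q : ℤ))
        - PowerSeries.C ε₂ *
            ∑ a ∈ Finset.range (b + 1), ∑ q ∈ Finset.Icc 3 (p - 1),
              PowerSeries.C (((q : K) - 2) * ((p : K) - (q : K))) *
                coeffS S0 S a ((q : ℤ) - 2) * coeffS S0 S (b - a) ((p : ℤ) - (q : ℤ))
        = 0 :=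
  multi_backbone_phase_hierarchy_general K ε₁ ε₂ μ hε₂ b hb S0 S x t W₀ SbL DxxSb DtSb Dx hx ht hW₀
    hDx0 hDx hSbL hDxxSb hDtSb heq
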